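/- arXiv:1502.04116 — 2 statements merged into one kernel-verified Lean document; each statement's English description precedes it below -/
import Mathlib

section
/- Let X : [0,T] → ℝ^d be a C^1 path, let f : ℝ^e → L(ℝ^d, ℝ^e) be a smooth (C^∞) vector field such that f^{∘(N+1)} is bounded, and let Y : [0,T] → ℝ^e solve Y'_t = f(Y_t)(X'_t) with Y_0 = y_0. Then for every 0 ≤ s ≤ t ≤ T, |Y_t − Y_s − Σ_{k=1}^{N} f^{∘k}(Y_s)(X^k_{s,t})| ≤ (sup_{x ∈ ℝ^e} ‖f^{∘(N+1)}(x)‖_{op}) · (∫_s^t |X'(u)| du)^{N+1} / N!. -/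
open MeasureTheory

noncomputable section

/-- The `k`-th tensor power of `ℝ^d`, identified with `ℝ^(d^k)` with the Euclidean norm. -/
abbrev Tpow (d k : ℕ) : Type := EuclideanSpace ℝ (Fin k → Fin d)

/-- Tensor product of tensor-power vectors. -/
def tmul {d k l : ℕ} (v : Tpow d k) (w : Tpow d l) : Tpow d (k + l) :=
  WithLp.toLp 2 (fun i => v (fun j => i (Fin.castAdd l j)) * w (fun j => i (Fin.natAdd k j)))

/-- Reindexing cast between tensor powers of equal order. -/
def tcast {d k l : ℕ} (h : k = l) (v : Tpow d k) : Tpow d l :=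
  WithLp.toLp 2 (fun i => v (fun j => i (Fin.cast h j)))

/-- Tensor product `a ⊗ w` of a vector of `ℝ^d` with a `k`-tensor. -/
def consT {d k : ℕ} (a : EuclideanSpace ℝ (Fin d)) (w : Tpow d k) : Tpow d (k + 1) :=
  WithLp.toLp 2 (fun i => a (i 0) * w (fun j => i j.succ))

/-- Iterated integrals `X^k_{s,t} = ∫_{s<s₁<⋯<s_k<t} X'(s₁) ⊗ ⋯ ⊗ X'(s_k) ds₁⋯ds_k`
of a C¹ path, defined recursively: `X^{k+1}_{s,t} = ∫_s^t X^k_{s,u} ⊗ X'(u) du`. -/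
def iterInt {d : ℕ} (X : ℝ → EuclideanSpace ℝ (Fin d)) : (k : ℕ) → ℝ → ℝ → Tpow d k
  | 0, _, _ => WithLp.toLp 2 (fun _ => 1)
  | (k+1), s, t => WithLp.toLp 2 (fun i =>
      ∫ u in s..t, iterInt X k s u (fun j => i j.castSucc) * deriv X u (i (Fin.last k)))

/-- Slicing a `(k+1)`-tensor along first coordinate `j`. -/
def sliceT {d : ℕ} (k : ℕ) (j : Fin d) : Tpow d (k + 1) →L[ℝ] Tpow d k :=
  LinearMap.toContinuousLinearMap
    { toFun := fun w => (WithLp.toLp 2 (fun v => w (Fin.cons j v)) : Tpow d k)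
      map_add' := fun _ _ => rfl
      map_smul' := fun _ _ => rfl }

/-- `f^{∘k}` defined inductively: `f^{∘0}(y)(v) = v·y` (so that `f^{∘1} = f` under
`(ℝ^d)^{⊗1} ≅ ℝ^d`), and `f^{∘(k+1)}(y)(a ⊗ v) = (D(f^{∘k})(y)(f(y)(a)))(v)`, encoded by
decomposing a `(k+1)`-tensor along its first coordinate. -/
def fcirc {d e : ℕ}
    (f : EuclideanSpace ℝ (Fin e) → (EuclideanSpace ℝ (Fin d) →L[ℝ] EuclideanSpace ℝ (Fin e))) :
    (k : ℕ) → EuclideanSpace ℝ (Fin e) → (Tpow d k →L[ℝ] EuclideanSpace ℝ (Fin e))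
  | 0 => fun y => LinearMap.toContinuousLinearMap
      { toFun := fun v => v (fun i => i.elim0) • y
        map_add' := fun v v' => by simp [PiLp.add_apply, add_smul]
        map_smul' := fun c v => by simp [PiLp.smul_apply, smul_smul] }
  | (k+1) => fun y =>
      ∑ j : Fin d, ((fderiv ℝ (fcirc f k) y) (f y (EuclideanSpace.single j 1))).comp (sliceT k j)

lemma sliceT_consT {d k : ℕ} (a : EuclideanSpace ℝ (Fin d)) (w : Tpow d k) (j : Fin d) :
    sliceT k j (consT a w) = a j • w := by
  ext v
  show (consT a w) (Fin.cons j v) = (a j • w) v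
  show a ((Fin.cons j v : Fin (k+1) → Fin d) 0)
      * w (fun j1 => (Fin.cons j v : Fin (k+1) → Fin d) j1.succ) = a j * w v
  rw [Fin.cons_zero]
  exact congrArg (fun z => a j * w z) (funext fun j1 => Fin.cons_succ (α := fun _ => Fin d) j v j1)
lemma norm_consT {d k : ℕ} (a : EuclideanSpace ℝ (Fin d)) (w : Tpow d k) :
    ‖consT a w‖ = ‖a‖ * ‖w‖ := by
  have h1 : ∑ i : Fin (k+1) → Fin d, ‖consT a w i‖ ^ 2
      = (∑ j : Fin d, ‖a j‖ ^ 2) * (∑ v : Fin k → Fin d, ‖w v‖ ^ 2) := by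
    rw [Finset.sum_mul_sum, ← Fintype.sum_prod_type']
    refine (Fintype.sum_equiv (Fin.consEquiv (fun _ => Fin d))
      (fun p => ‖a p.1‖ ^ 2 * ‖w p.2‖ ^ 2) _ ?_).symm
    intro p
    show ‖a p.1‖ ^ 2 * ‖w p.2‖ ^ 2 = ‖consT a w (Fin.cons p.1 p.2)‖ ^ 2
    have : consT a w (Fin.cons p.1 p.2) = a p.1 * w p.2 := by
      show a ((Fin.cons p.1 p.2 : Fin (k+1) → Fin d) 0)
          * w (fun j1 => (Fin.cons p.1 p.2 : Fin (k+1) → Fin d) j1.succ) = a p.1 * w p.2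
      rw [Fin.cons_zero]
      exact congrArg (fun z => a p.1 * w z)
        (funext fun j1 => Fin.cons_succ (α := fun _ => Fin d) p.1 p.2 j1)
    rw [this, norm_mul, mul_pow]
  rw [EuclideanSpace.norm_eq, EuclideanSpace.norm_eq, EuclideanSpace.norm_eq,
    ← Real.sqrt_mul (by positivity), ← h1]
lemma continuous_euclidean_of_coords {α : Type*} [TopologicalSpace α] {ι : Type*} [Fintype ι]
    {g : α → EuclideanSpace ℝ ι} (h : ∀ i, Continuous fun x => g x i) : Continuous g := by
  exact ((PiLp.continuousLinearEquiv 2 ℝ (fun _ : ι => ℝ)).symm.continuous).comp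
    (continuous_pi h : Continuous fun x (i : ι) => g x i)

lemma continuous_coord {α : Type*} [TopologicalSpace α] {ι : Type*} [Fintype ι]
    {g : α → EuclideanSpace ℝ ι} (h : Continuous g) (i : ι) :
    Continuous fun x => g x i :=
  ((EuclideanSpace.proj (𝕜 := ℝ) i).continuous).comp h

lemma intervalIntegral_coord {ι : Type*} [Fintype ι] {g : ℝ → EuclideanSpace ℝ ι} {a b : ℝ}
    (hg : IntervalIntegrable g MeasureTheory.volume a b) (i : ι) :
    (∫ x in a..b, g x) i = ∫ x in a..b, g x i := by
  have := (ContinuousLinearMap.intervalIntegral_comp_comm (EuclideanSpace.proj (𝕜 := ℝ) i) hg).symm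
  simpa using this

lemma iterInt_joint_cont {d : ℕ} {X : ℝ → EuclideanSpace ℝ (Fin d)} (hX' : Continuous (deriv X))
    (k : ℕ) : Continuous (fun p : ℝ × ℝ => iterInt X k p.1 p.2) := by
  induction k with
  | zero => exact continuous_const
  | succ k ih =>
    apply continuous_euclidean_of_coords
    intro i
    have hGc : Continuous (Function.uncurry (fun (p : ℝ × ℝ) (u : ℝ) =>
        iterInt X k p.1 u (fun j => i j.castSucc) * deriv X u (i (Fin.last k)))) := by
      apply Continuous.mul
      · exact (continuous_coord ih _).comp
          (by fun_prop : Continuous fun q : (ℝ × ℝ) × ℝ => ((q.1.1 : ℝ), (q.2 : ℝ)))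
      · exact (continuous_coord hX' _).comp continuous_snd
    have key : ∀ p : ℝ × ℝ, iterInt X (k+1) p.1 p.2 i =
        (∫ u in (0:ℝ)..p.2, iterInt X k p.1 u (fun j => i j.castSucc) * deriv X u (i (Fin.last k)))
        - ∫ u in (0:ℝ)..p.1, iterInt X k p.1 u (fun j => i j.castSucc) * deriv X u (i (Fin.last k)) := by
      intro p
      show (∫ u in p.1..p.2, iterInt X k p.1 u (fun j => i j.castSucc) * deriv X u (i (Fin.last k))) = _
      rw [← intervalIntegral.integral_interval_sub_left]
      · exact Continuous.intervalIntegrable (by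
          exact hGc.comp (continuous_const.prodMk continuous_id' : Continuous fun u : ℝ => (p, u))) _ _
      · exact Continuous.intervalIntegrable (by
          exact hGc.comp (continuous_const.prodMk continuous_id' : Continuous fun u : ℝ => (p, u))) _ _
    simp only [key]
    apply Continuous.sub
    · exact intervalIntegral.continuous_parametric_intervalIntegral_of_continuous hGc continuous_snd
    · exact intervalIntegral.continuous_parametric_intervalIntegral_of_continuous hGc continuous_fst
open MeasureTheory in
lemma triangle_swap (F : ℝ → ℝ → ℝ) (hF : Continuous (Function.uncurry F))
    {s t : ℝ} (hst : s ≤ t) :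
    (∫ u in s..t, (∫ r in s..u, F r u)) = ∫ r in s..t, (∫ u in r..t, F r u) := by
  set μ : Measure ℝ := volume.restrict (Set.Ioc s t) with hμ
  have hfin : IsFiniteMeasure μ := by
    constructor; rw [hμ]; simp [Measure.restrict_apply]
  set H : ℝ × ℝ → ℝ := fun p => if p.1 ≤ p.2 then F p.1 p.2 else 0 with hH
  -- integrability
  obtain ⟨M, hM⟩ : ∃ M : ℝ, ∀ p : ℝ × ℝ, p ∈ Set.Icc s t ×ˢ Set.Icc s t → ‖F p.1 p.2‖ ≤ M := by
    obtain ⟨M, hM⟩ := (IsCompact.exists_bound_of_continuousOn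
      ((isCompact_Icc (a := s) (b := t)).prod isCompact_Icc) hF.continuousOn)
    exact ⟨M, fun p hp => hM p hp⟩
  have hHmeas : Measurable H := by
    apply Measurable.ite _ hF.measurable measurable_const
    exact measurableSet_le measurable_fst measurable_snd
  have hprod : μ.prod μ = (volume.prod volume).restrict ((Set.Ioc s t) ×ˢ (Set.Ioc s t)) := by
    rw [hμ, Measure.prod_restrict]
  have hHint : Integrable (Function.uncurry (fun r u => H (r, u))) (μ.prod μ) := by
    refine Integrable.mono' (g := fun _ => max M 0) (integrable_const _)
      (hHmeas.aestronglyMeasurable.congr (by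
        refine Filter.Eventually.of_forall fun p => ?_
        rfl)) ?_
    rw [hprod]
    rw [ae_restrict_iff' (measurableSet_Ioc.prod measurableSet_Ioc)]
    refine Filter.Eventually.of_forall fun p hp => ?_
    show ‖H p‖ ≤ max M 0
    rw [hH]
    dsimp only
    split_ifs with h
    · refine le_trans (hM p ⟨Set.Ioc_subset_Icc_self hp.1, Set.Ioc_subset_Icc_self hp.2⟩) (le_max_left _ _)
    · simp
  have swap := MeasureTheory.integral_integral_swap (f := fun r u => H (r, u)) (μ := μ) (ν := μ) hHint
  -- identify LHS
  have hL : (∫ u in s..t, (∫ r in s..u, F r u)) = ∫ u, (∫ r, H (r, u) ∂μ) ∂μ := by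
    rw [intervalIntegral.integral_of_le hst]
    refine setIntegral_congr_fun measurableSet_Ioc fun u hu => ?_
    have hsu : s ≤ u := le_of_lt hu.1
    rw [intervalIntegral.integral_of_le hsu, hμ]
    have : ∀ r : ℝ, H (r, u) = Set.indicator (Set.Iic u) (fun r => F r u) r := by
      intro r
      rw [hH, Set.indicator_apply]
      simp [Set.mem_Iic]
    simp_rw [this]
    rw [MeasureTheory.setIntegral_indicator measurableSet_Iic]
    congr 1
    rw [Set.Ioc_inter_Iic, min_eq_right hu.2]
  -- identify RHS
  have hR : (∫ r in s..t, (∫ u in r..t, F r u)) = ∫ r, (∫ u, H (r, u) ∂μ) ∂μ := by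
    rw [intervalIntegral.integral_of_le hst]
    refine setIntegral_congr_fun measurableSet_Ioc fun r hr => ?_
    have hrt : r ≤ t := hr.2
    rw [intervalIntegral.integral_of_le hrt, hμ]
    have : ∀ u : ℝ, H (r, u) = Set.indicator (Set.Ici r) (fun u => F r u) u := by
      intro u
      rw [hH, Set.indicator_apply]
      simp [Set.mem_Ici]
    simp_rw [this]
    rw [MeasureTheory.setIntegral_indicator measurableSet_Ici]
    have hset : Set.Ioc s t ∩ Set.Ici r = Set.Icc r t :=
      Set.ext fun x => ⟨fun hx => ⟨hx.2, hx.1.2⟩,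
        fun hx => ⟨⟨lt_of_lt_of_le hr.1 hx.1, hx.2⟩, hx.1⟩⟩
    rw [hset, MeasureTheory.integral_Icc_eq_integral_Ioc]
  rw [hL, hR]
  exact swap.symm
section Star
variable {d : ℕ} {X : ℝ → EuclideanSpace ℝ (Fin d)}

lemma iterInt_left_rec (hX' : Continuous (deriv X)) :
    ∀ (m : ℕ) {r t : ℝ}, r ≤ t → ∀ i : Fin (m+1) → Fin d,
    iterInt X (m+1) r t i
      = ∫ v in r..t, deriv X v (i 0) * iterInt X m v t (fun j => i j.succ) := by
  intro m
  induction m with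
  | zero =>
    intro r t hrt i
    show (∫ u in r..t, iterInt X 0 r u (fun j => i j.castSucc) * deriv X u (i (Fin.last 0))) = _
    refine intervalIntegral.integral_congr fun u _ => ?_
    show iterInt X 0 r u (fun j => i j.castSucc) * deriv X u (i (Fin.last 0))
        = deriv X u (i 0) * iterInt X 0 u t (fun j => i j.succ)
    rw [show iterInt X 0 r u (fun j => i j.castSucc) = 1 from rfl,
      show iterInt X 0 u t (fun j => i j.succ) = 1 from rfl,
      show (Fin.last 0) = (0 : Fin 1) from rfl, one_mul, mul_one]
  | succ m ih =>
    intro r t hrt i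
    have hcM : Continuous fun p : ℝ × ℝ => iterInt X m p.1 p.2 (fun j => i j.succ.castSucc) :=
      continuous_coord (iterInt_joint_cont hX' m) _
    have hF : Continuous (Function.uncurry (fun v u =>
        deriv X v (i 0) * iterInt X m v u (fun j => i j.succ.castSucc)
          * deriv X u (i (Fin.last (m+1))))) := by
      refine Continuous.mul (Continuous.mul ?_ ?_) ?_
      · exact (continuous_coord hX' _).comp continuous_fst
      · exact hcM
      · exact (continuous_coord hX' _).comp continuous_snd
    have step1 : iterInt X (m+1+1) r t i
        = ∫ u in r..t, (∫ v in r..u, deriv X v (i 0)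
            * iterInt X m v u (fun j => i j.succ.castSucc)
            * deriv X u (i (Fin.last (m+1)))) := by
      show (∫ u in r..t, iterInt X (m+1) r u (fun j => i j.castSucc)
          * deriv X u (i (Fin.last (m+1)))) = _
      refine intervalIntegral.integral_congr fun u hu => ?_
      rw [Set.uIcc_of_le hrt] at hu
      rw [ih hu.1 (fun j => i j.castSucc)]
      rw [← intervalIntegral.integral_mul_const]
      refine intervalIntegral.integral_congr fun v _ => ?_
      dsimp only
      rw [show (Fin.castSucc (0 : Fin (m+1))) = (0 : Fin (m+2)) from rfl]
    rw [step1, triangle_swap _ hF hrt]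
    refine intervalIntegral.integral_congr fun v hv => ?_
    rw [Set.uIcc_of_le hrt] at hv
    dsimp only
    have inner : (∫ u in v..t, deriv X v (i 0)
          * iterInt X m v u (fun j => i j.succ.castSucc) * deriv X u (i (Fin.last (m+1))))
        = deriv X v (i 0) * ∫ u in v..t,
            iterInt X m v u (fun j => i j.succ.castSucc) * deriv X u (i (Fin.last (m+1))) := by
      rw [← intervalIntegral.integral_const_mul]
      refine intervalIntegral.integral_congr fun u _ => ?_
      ring
    rw [inner]
    congr 1

end Star
section Vec
variable {d : ℕ} {X : ℝ → EuclideanSpace ℝ (Fin d)}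

lemma consT_cont (hX' : Continuous (deriv X)) (m : ℕ) {t : ℝ} :
    Continuous fun v => consT (deriv X v) (iterInt X m v t) := by
  apply continuous_euclidean_of_coords
  intro i
  show Continuous fun v => deriv X v (i 0) * iterInt X m v t (fun j => i j.succ)
  have h2 : Continuous fun v : ℝ => iterInt X m v t := by
    have := (iterInt_joint_cont hX' m).comp
      (continuous_id.prodMk continuous_const : Continuous fun v : ℝ => (v, t))
    exact this
  exact (continuous_coord hX' _).mul (continuous_coord h2 _)

lemma iterInt_left_rec_vec (hX' : Continuous (deriv X)) (m : ℕ) {r t : ℝ} (hrt : r ≤ t) :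
    iterInt X (m+1) r t = ∫ v in r..t, consT (deriv X v) (iterInt X m v t) := by
  ext i
  rw [intervalIntegral_coord (Continuous.intervalIntegrable (consT_cont hX' m) _ _) i]
  rw [iterInt_left_rec hX' m hrt i]
  exact intervalIntegral.integral_congr fun v _ => rfl

lemma iterInt_self_zero (k : ℕ) (t : ℝ) : iterInt X (k+1) t t = 0 := by
  ext i
  show (∫ u in t..t, iterInt X k t u (fun j => i j.castSucc) * deriv X u (i (Fin.last k))) = _
  rw [intervalIntegral.integral_same]
  rfl

lemma norm_tpow_zero (w : Tpow d 0) : ‖w‖ = |w (fun i => i.elim0)| := by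
  rw [EuclideanSpace.norm_eq]
  rw [show (Finset.univ : Finset (Fin 0 → Fin d)) = {fun i => i.elim0} from by
    apply Finset.eq_singleton_iff_unique_mem.mpr
    exact ⟨Finset.mem_univ _, fun x _ => funext fun i => i.elim0⟩]
  rw [Finset.sum_singleton, Real.sqrt_sq_eq_abs, abs_norm]
  exact (Real.norm_eq_abs _)

lemma ftc_pow (hX' : Continuous (deriv X)) (k : ℕ) {r t : ℝ} :
    (∫ v in r..t, ‖deriv X v‖ * ((∫ u in v..t, ‖deriv X u‖) ^ k / (Nat.factorial k)))
      = (∫ u in r..t, ‖deriv X u‖) ^ (k+1) / (Nat.factorial (k+1)) := by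
  set W : ℝ → ℝ := fun v => ∫ u in v..t, ‖deriv X u‖ with hW
  have hXn : Continuous fun u => ‖deriv X u‖ := hX'.norm
  have hWc : Continuous W := by
    have h1 : Continuous fun v => ∫ u in (t:ℝ)..v, ‖deriv X u‖ :=
      intervalIntegral.continuous_primitive (fun a b => hXn.intervalIntegrable a b) t
    have e : W = fun v => -(∫ u in (t:ℝ)..v, ‖deriv X u‖) := by
      funext v; rw [hW]; exact intervalIntegral.integral_symm t v
    rw [e]; exact h1.neg
  have hWd : ∀ v : ℝ, HasDerivAt W (-‖deriv X v‖) v := fun v =>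
    intervalIntegral.integral_hasDerivAt_left (hXn.intervalIntegrable _ _)
      (hXn.stronglyMeasurableAtFilter _ _) hXn.continuousAt
  have hfac : ((Nat.factorial (k+1) : ℝ)) ≠ 0 := by
    exact_mod_cast Nat.factorial_ne_zero (k+1)
  have hfac' : ((Nat.factorial k : ℝ)) ≠ 0 := by
    exact_mod_cast Nat.factorial_ne_zero k
  have hg : ∀ v : ℝ, HasDerivAt (fun v => -(W v ^ (k+1) / (Nat.factorial (k+1))))
      (‖deriv X v‖ * (W v ^ k / (Nat.factorial k))) v := by
    intro v
    have h1 := (((hWd v).pow (k+1)).div_const ((Nat.factorial (k+1) : ℝ))).neg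
    refine h1.congr_deriv ?_
    rw [Nat.factorial_succ, Nat.add_sub_cancel]
    push_cast
    field_simp
  rw [intervalIntegral.integral_eq_sub_of_hasDerivAt (fun v _ => hg v)
    ((hXn.mul ((hWc.pow _).div_const _)).intervalIntegrable _ _)]
  have hWt : W t = 0 := intervalIntegral.integral_same
  show -(W t ^ (k+1) / _) - -(W r ^ (k+1) / _) = W r ^ (k+1) / _
  rw [hWt, zero_pow (Nat.succ_ne_zero k)]
  ring

lemma iterInt_norm_le (hX' : Continuous (deriv X)) :
    ∀ (k : ℕ) {r t : ℝ}, r ≤ t →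
      ‖iterInt X k r t‖ ≤ (∫ u in r..t, ‖deriv X u‖) ^ k / (Nat.factorial k) := by
  intro k
  induction k with
  | zero =>
    intro r t hrt
    rw [norm_tpow_zero]
    rw [show iterInt X 0 r t (fun i => i.elim0) = 1 from rfl]
    norm_num
  | succ k ih =>
    intro r t hrt
    have hXn : Continuous fun u => ‖deriv X u‖ := hX'.norm
    have hWc : Continuous fun v => ∫ u in v..t, ‖deriv X u‖ := by
      have h1 : Continuous fun v => ∫ u in (t:ℝ)..v, ‖deriv X u‖ :=
        intervalIntegral.continuous_primitive (fun a b => hXn.intervalIntegrable a b) t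
      have e : (fun v => ∫ u in v..t, ‖deriv X u‖)
          = fun v => -(∫ u in (t:ℝ)..v, ‖deriv X u‖) := by
        funext v; exact intervalIntegral.integral_symm t v
      rw [e]; exact h1.neg
    calc ‖iterInt X (k+1) r t‖
        = ‖∫ v in r..t, consT (deriv X v) (iterInt X k v t)‖ := by
          rw [iterInt_left_rec_vec hX' k hrt]
      _ ≤ ∫ v in r..t, ‖consT (deriv X v) (iterInt X k v t)‖ :=
          intervalIntegral.norm_integral_le_integral_norm hrt
      _ = ∫ v in r..t, ‖deriv X v‖ * ‖iterInt X k v t‖ := by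
          exact intervalIntegral.integral_congr fun v _ => norm_consT _ _
      _ ≤ ∫ v in r..t, ‖deriv X v‖ * ((∫ u in v..t, ‖deriv X u‖) ^ k / (Nat.factorial k)) := by
          refine intervalIntegral.integral_mono_on hrt ?_ ?_ ?_
          · refine (hXn.mul ?_).intervalIntegrable _ _
            have h2 : Continuous fun v : ℝ => iterInt X k v t := by
              have := (iterInt_joint_cont hX' k).comp
                (continuous_id.prodMk continuous_const : Continuous fun v : ℝ => (v, t))
              exact this
            exact h2.norm
          · exact (hXn.mul ((hWc.pow _).div_const _)).intervalIntegrable _ _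
          · intro x hx
            exact mul_le_mul_of_nonneg_left (ih hx.2) (norm_nonneg _)
      _ = (∫ u in r..t, ‖deriv X u‖) ^ (k+1) / (Nat.factorial (k+1)) := ftc_pow hX' k

end Vec
section Fcirc
variable {d e : ℕ}
  {f : EuclideanSpace ℝ (Fin e) → (EuclideanSpace ℝ (Fin d) →L[ℝ] EuclideanSpace ℝ (Fin e))}

lemma fcirc_zero_apply (y : EuclideanSpace ℝ (Fin e)) (v : Tpow d 0) :
    fcirc f 0 y v = v (fun i => i.elim0) • y := rfl

lemma fcirc_zero_eq :
    fcirc f 0 = ⇑(ContinuousLinearMap.smulRightL ℝ (Tpow d 0) (EuclideanSpace ℝ (Fin e))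
      (EuclideanSpace.proj (𝕜 := ℝ) (fun i : Fin 0 => i.elim0))) := by
  funext y
  refine ContinuousLinearMap.ext fun v => ?_
  rw [fcirc_zero_apply]
  rw [show ((ContinuousLinearMap.smulRightL ℝ (Tpow d 0) (EuclideanSpace ℝ (Fin e))
      (EuclideanSpace.proj (𝕜 := ℝ) (fun i : Fin 0 => i.elim0))) y) v
    = (EuclideanSpace.proj (𝕜 := ℝ) (fun i : Fin 0 => i.elim0)) v • y
    from ContinuousLinearMap.smulRight_apply]
  rfl

lemma fcirc_succ_def (k : ℕ) (y : EuclideanSpace ℝ (Fin e)) :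
    fcirc f (k+1) y = ∑ j : Fin d,
      ((fderiv ℝ (fcirc f k) y) (f y (EuclideanSpace.single j 1))).comp (sliceT k j) := rfl

lemma fcirc_contDiff (hf : ContDiff ℝ (⊤ : ℕ∞) f) (k : ℕ) : ContDiff ℝ (⊤ : ℕ∞) (fcirc f (d := d) k) := by
  induction k with
  | zero =>
    rw [fcirc_zero_eq]
    exact (ContinuousLinearMap.smulRightL ℝ (Tpow d 0) (EuclideanSpace ℝ (Fin e))
      (EuclideanSpace.proj (𝕜 := ℝ) (fun i : Fin 0 => i.elim0))).contDiff
  | succ k ih =>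
    have : (fcirc f (k+1) : EuclideanSpace ℝ (Fin e) → _) = fun y => ∑ j : Fin d,
        ((fderiv ℝ (fcirc f k) y) (f y (EuclideanSpace.single j 1))).comp (sliceT k j) := rfl
    rw [this]
    refine ContDiff.sum fun j _ => ?_
    exact ContDiff.clm_comp
      (((ih.fderiv_right (by simp)).clm_apply (hf.clm_apply contDiff_const))) contDiff_const

lemma euclidean_sum_single (a : EuclideanSpace ℝ (Fin d)) :
    (∑ j : Fin d, a j • EuclideanSpace.single j (1:ℝ)) = a := by
  ext j'
  have h := map_sum (EuclideanSpace.proj (𝕜 := ℝ) j')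
    (fun j => a j • EuclideanSpace.single j (1:ℝ)) Finset.univ
  have h2 : EuclideanSpace.proj (𝕜 := ℝ) j' (∑ j : Fin d, a j • EuclideanSpace.single j (1:ℝ))
      = (∑ j : Fin d, a j • EuclideanSpace.single j (1:ℝ)) j' := rfl
  rw [← h2, h]
  simp [EuclideanSpace.single_apply]

lemma fcirc_succ_apply (hf : ContDiff ℝ (⊤ : ℕ∞) f) (k : ℕ) (y : EuclideanSpace ℝ (Fin e))
    (a : EuclideanSpace ℝ (Fin d)) (w : Tpow d k) :
    fcirc f (k+1) y (consT a w) = fderiv ℝ (fcirc f k) y (f y a) w := by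
  rw [fcirc_succ_def, ContinuousLinearMap.sum_apply]
  simp only [ContinuousLinearMap.comp_apply, sliceT_consT]
  conv_rhs => rw [← euclidean_sum_single a]
  rw [map_sum, map_sum, ContinuousLinearMap.sum_apply]
  refine Finset.sum_congr rfl fun j _ => ?_
  rw [(fderiv ℝ (fcirc f k) y ((f y) (EuclideanSpace.single j 1))).map_smul]
  rw [(f y).map_smul, (fderiv ℝ (fcirc f k) y).map_smul, ContinuousLinearMap.smul_apply]

lemma fcirc_one_apply (y : EuclideanSpace ℝ (Fin e)) (a : EuclideanSpace ℝ (Fin d))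
    (hf : ContDiff ℝ (⊤ : ℕ∞) f) :
    fcirc f 1 y (consT a (WithLp.toLp 2 (fun _ => 1))) = f y a := by
  rw [fcirc_succ_apply hf 0 y a]
  rw [fcirc_zero_eq]
  rw [ContinuousLinearMap.fderiv]
  rw [show ((ContinuousLinearMap.smulRightL ℝ (Tpow d 0) (EuclideanSpace ℝ (Fin e))
      (EuclideanSpace.proj (𝕜 := ℝ) (fun i : Fin 0 => i.elim0))) (f y a)) (WithLp.toLp 2 (fun _ => 1))
    = (EuclideanSpace.proj (𝕜 := ℝ) (fun i : Fin 0 => i.elim0)) (WithLp.toLp 2 (fun _ => (1:ℝ))) • (f y a)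
    from ContinuousLinearMap.smulRight_apply]
  show (1:ℝ) • (f y a) = f y a
  rw [one_smul]

end Fcirc
section Main
variable {d e : ℕ}

lemma taylor_rec (X : ℝ → EuclideanSpace ℝ (Fin d)) (hX : ContDiff ℝ 1 X)
    (f : EuclideanSpace ℝ (Fin e) → (EuclideanSpace ℝ (Fin d) →L[ℝ] EuclideanSpace ℝ (Fin e)))
    (hf : ContDiff ℝ (⊤ : ℕ∞) f) (T : ℝ) (Y : ℝ → EuclideanSpace ℝ (Fin e))
    (hY : ∀ u ∈ Set.Icc (0 : ℝ) T, HasDerivAt Y (f (Y u) (deriv X u)) u)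
    {s t : ℝ} (hs : 0 ≤ s) (hst : s ≤ t) (htT : t ≤ T) (m : ℕ) :
    Y t - Y s - ∑ k ∈ Finset.Icc 1 m, fcirc f k (Y s) (iterInt X k s t)
      = ∫ u in s..t, fcirc f (m+1) (Y u) (consT (deriv X u) (iterInt X m u t)) := by
  have hXd : Continuous (deriv X) := hX.continuous_deriv le_rfl
  have hsub : Set.Icc s t ⊆ Set.Icc 0 T := Set.Icc_subset_Icc hs htT
  have hYc : ContinuousOn Y (Set.Icc 0 T) :=
    fun u hu => (hY u hu).continuousAt.continuousWithinAt
  have hYcs : ContinuousOn Y (Set.Icc s t) := hYc.mono hsub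
  induction m with
  | zero =>
    rw [show Finset.Icc 1 0 = ∅ from rfl, Finset.sum_empty, sub_zero]
    have h1 : (∫ u in s..t, f (Y u) (deriv X u)) = Y t - Y s := by
      refine intervalIntegral.integral_eq_sub_of_hasDerivAt (fun u hu => ?_) ?_
      · refine hY u (hsub ?_)
        rwa [Set.uIcc_of_le hst] at hu
      · refine ContinuousOn.intervalIntegrable ?_
        rw [Set.uIcc_of_le hst]
        exact (hf.continuous.comp_continuousOn hYcs).clm_apply hXd.continuousOn
    rw [← h1]
    exact intervalIntegral.integral_congr fun u _ =>
      ((fcirc_one_apply (Y u) (deriv X u) hf).symm : f (Y u) (deriv X u) = _)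
  | succ m ih =>
    set A : ℝ → (Tpow d (m+1) →L[ℝ] EuclideanSpace ℝ (Fin e)) :=
      fun u => fcirc f (m+1) (Y u) with hA
    set G : ℝ → Tpow d (m+1) := fun u => iterInt X (m+1) u t with hG
    set g : ℝ → Tpow d (m+1) := fun u => consT (deriv X u) (iterInt X m u t) with hg
    have hgc : Continuous g := consT_cont hXd m
    have hGc : Continuous G := by
      have := (iterInt_joint_cont hXd (m+1)).comp
        (continuous_id.prodMk continuous_const : Continuous fun v : ℝ => (v, t))
      exact this
    have hAc : ContinuousOn A (Set.Icc s t) :=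
      (fcirc_contDiff hf (m+1)).continuous.comp_continuousOn hYcs
    -- step 1 : telescoping
    have hsum : (∑ k ∈ Finset.Icc 1 (m+1), fcirc f k (Y s) (iterInt X k s t))
        = (∑ k ∈ Finset.Icc 1 m, fcirc f k (Y s) (iterInt X k s t))
          + fcirc f (m+1) (Y s) (iterInt X (m+1) s t) :=
      Finset.sum_Icc_succ_top (Nat.one_le_iff_ne_zero.mpr (Nat.succ_ne_zero m)) _
    have hpull : fcirc f (m+1) (Y s) (iterInt X (m+1) s t)
        = ∫ u in s..t, A s (g u) := by
      rw [iterInt_left_rec_vec hXd m hst]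
      exact (ContinuousLinearMap.intervalIntegral_comp_comm _
        (hgc.intervalIntegrable _ _)).symm
    have hint1 : IntervalIntegrable (fun u => A u (g u)) MeasureTheory.volume s t := by
      refine ContinuousOn.intervalIntegrable ?_
      rw [Set.uIcc_of_le hst]
      exact hAc.clm_apply hgc.continuousOn
    have hint2 : IntervalIntegrable (fun u => A s (g u)) MeasureTheory.volume s t :=
      ((A s).continuous.comp hgc).intervalIntegrable _ _
    have step1 : Y t - Y s - ∑ k ∈ Finset.Icc 1 (m+1), fcirc f k (Y s) (iterInt X k s t)
        = ∫ u in s..t, ((A u - A s) (g u)) := by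
      rw [hsum, hpull, ← sub_sub, ih]
      rw [← intervalIntegral.integral_sub hint1 hint2]
      exact intervalIntegral.integral_congr fun u _ => rfl
    -- step 2 : integration by parts
    set D : ℝ → (Tpow d (m+1) →L[ℝ] EuclideanSpace ℝ (Fin e)) :=
      fun u => fderiv ℝ (fcirc f (m+1)) (Y u) (f (Y u) (deriv X u)) with hD
    have hAder : ∀ u ∈ Set.Icc (0:ℝ) T, HasDerivAt A (D u) u := by
      intro u hu
      exact (((fcirc_contDiff hf (m+1)).differentiable (by simp)).differentiableAt.hasFDerivAt).comp_hasDerivAt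
        u (hY u hu)
    have hGder : ∀ u ∈ Set.Ioo s t, HasDerivAt G (-(g u)) u := by
      intro u hu
      have hG2 : HasDerivAt (fun r => ∫ v in r..t, consT (deriv X v) (iterInt X m v t))
          (-(g u)) u :=
        intervalIntegral.integral_hasDerivAt_left (hgc.intervalIntegrable _ _)
          (hgc.stronglyMeasurableAtFilter _ _) hgc.continuousAt
      refine HasDerivAt.congr_of_eventuallyEq hG2 ?_
      filter_upwards [Iio_mem_nhds hu.2] with r hr
      exact iterInt_left_rec_vec hXd m hr.le
    have hDc : ContinuousOn (fun u => D u (G u)) (Set.Icc s t) := by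
      have hD1 : Continuous (fderiv ℝ (fcirc f (m+1) (d := d) (e := e))) :=
        ((fcirc_contDiff hf (m+1)).fderiv_right (m := ((⊤ : ℕ∞) : WithTop ℕ∞)) (by exact_mod_cast le_top)).continuous
      exact ((hD1.comp_continuousOn hYcs).clm_apply
        ((hf.continuous.comp_continuousOn hYcs).clm_apply hXd.continuousOn)).clm_apply
        hGc.continuousOn
    have hintD : IntervalIntegrable (fun u => D u (G u)) MeasureTheory.volume s t := by
      refine ContinuousOn.intervalIntegrable ?_
      rw [Set.uIcc_of_le hst]
      exact hDc
    have hint3 : IntervalIntegrable (fun u => (A u - A s) (g u)) MeasureTheory.volume s t := by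
      have : (fun u => (A u - A s) (g u)) = fun u => A u (g u) - A s (g u) := by
        funext u; rfl
      rw [this]
      exact hint1.sub hint2
    set Φ : ℝ → EuclideanSpace ℝ (Fin e) := fun u => (A u - A s) (G u) with hΦ
    have key : (∫ u in s..t, (D u (G u) - (A u - A s) (g u)))
        = Φ t - Φ s := by
      refine intervalIntegral.integral_eq_sub_of_hasDeriv_right_of_le
        (f := Φ) (f' := fun u => D u (G u) - (A u - A s) (g u)) hst ?_ ?_ ?_
      · exact (hAc.sub continuousOn_const).clm_apply hGc.continuousOn
      · intro u hu
        have hu' : u ∈ Set.Icc (0:ℝ) T := hsub ⟨hu.1.le, hu.2.le⟩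
        have hder := ((hAder u hu').sub_const (A s)).clm_apply (hGder u hu)
        have : D u (G u) + (A u - A s) (-(g u)) = D u (G u) - (A u - A s) (g u) := by
          rw [ContinuousLinearMap.map_neg]; abel
        show HasDerivWithinAt Φ (D u (G u) - (A u - A s) (g u)) (Set.Ioi u) u
        rw [← this]
        exact hder.hasDerivWithinAt
      · exact hintD.sub hint3
    have hGt : G t = 0 := iterInt_self_zero m t
    have key2 : (∫ u in s..t, (D u (G u) - (A u - A s) (g u))) = 0 := by
      rw [key, hΦ]
      show (A t - A s) (G t) - (A s - A s) (G s) = 0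
      rw [hGt, ContinuousLinearMap.map_zero, sub_self, ContinuousLinearMap.zero_apply,
        sub_zero]
    have step2 : (∫ u in s..t, ((A u - A s) (g u))) = ∫ u in s..t, D u (G u) := by
      have hsplit := intervalIntegral.integral_sub hintD hint3
      rw [hsplit] at key2
      exact (sub_eq_zero.mp key2).symm
    -- step 3 : identify integrand
    rw [step1, step2]
    refine intervalIntegral.integral_congr fun u _ => ?_
    exact (fcirc_succ_apply hf (m+1) (Y u) (deriv X u) (iterInt X (m+1) u t)).symm

end Main

/-- For a C¹ path `X`, a smooth vector field `f` with `f^{∘(N+1)}` bounded,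
and a solution `Y` of `dY = f(Y) dX`, `Y₀ = y₀`, the Taylor remainder of order `N ≥ 1`
satisfies the factorial decay estimate
`|Y_t − Y_s − Σ_{k=1}^{N} f^{∘k}(Y_s)(X^k_{s,t})|
  ≤ (sup_x ‖f^{∘(N+1)}(x)‖_op) · (∫_s^t |X'(u)| du)^{N+1} / N!`. -/
theorem ode_taylor_remainder_factorial_bound {d e : ℕ} (T : ℝ)
    (X : ℝ → EuclideanSpace ℝ (Fin d)) (hX : ContDiff ℝ 1 X)
    (f : EuclideanSpace ℝ (Fin e) → (EuclideanSpace ℝ (Fin d) →L[ℝ] EuclideanSpace ℝ (Fin e)))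
    (hf : ContDiff ℝ (⊤ : ℕ∞) f)
    (N : ℕ) (hN : 1 ≤ N)
    (hbdd : ∃ C : ℝ, ∀ x, ‖fcirc f (N + 1) x‖ ≤ C)
    (Y : ℝ → EuclideanSpace ℝ (Fin e)) (y₀ : EuclideanSpace ℝ (Fin e))
    (hY0 : Y 0 = y₀)
    (hY : ∀ u ∈ Set.Icc (0 : ℝ) T, HasDerivAt Y (f (Y u) (deriv X u)) u)
    (s t : ℝ) (hs : 0 ≤ s) (hst : s ≤ t) (htT : t ≤ T) :
    ‖Y t - Y s - ∑ k ∈ Finset.Icc 1 N, fcirc f k (Y s) (iterInt X k s t)‖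
      ≤ (⨆ x, ‖fcirc f (N + 1) x‖) * (∫ u in s..t, ‖deriv X u‖) ^ (N + 1) / (Nat.factorial N : ℝ) := by
  have hXd : Continuous (deriv X) := hX.continuous_deriv le_rfl
  have hXn : Continuous fun u => ‖deriv X u‖ := hXd.norm
  have hsub : Set.Icc s t ⊆ Set.Icc 0 T := Set.Icc_subset_Icc hs htT
  have hYcs : ContinuousOn Y (Set.Icc s t) :=
    fun u hu => (hY u (hsub hu)).continuousAt.continuousWithinAt
  obtain ⟨C₀, hC₀⟩ := hbdd
  have hbdd' : BddAbove (Set.range fun x => ‖fcirc f (N+1) x‖) :=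
    ⟨C₀, by rintro _ ⟨x, rfl⟩; exact hC₀ x⟩
  set C : ℝ := ⨆ x, ‖fcirc f (N + 1) x‖ with hC
  have hCle : ∀ x, ‖fcirc f (N+1) x‖ ≤ C := fun x => le_ciSup hbdd' x
  have hC0 : (0:ℝ) ≤ C := le_trans (norm_nonneg _) (hCle 0)
  rw [taylor_rec X hX f hf T Y hY hs hst htT N]
  set W : ℝ → ℝ := fun v => ∫ u in v..t, ‖deriv X u‖ with hW
  have hWc : Continuous W := by
    have h1 : Continuous fun v => ∫ u in (t:ℝ)..v, ‖deriv X u‖ :=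
      intervalIntegral.continuous_primitive (fun a b => hXn.intervalIntegrable a b) t
    have e : W = fun v => -(∫ u in (t:ℝ)..v, ‖deriv X u‖) := by
      funext v; rw [hW]; exact intervalIntegral.integral_symm t v
    rw [e]; exact h1.neg
  have hL0 : (0:ℝ) ≤ ∫ u in s..t, ‖deriv X u‖ :=
    intervalIntegral.integral_nonneg hst (fun u _ => norm_nonneg _)
  have hfac1 : (0:ℝ) < (Nat.factorial N : ℝ) := by
    exact_mod_cast Nat.factorial_pos N
  have hfacle : (Nat.factorial N : ℝ) ≤ (Nat.factorial (N+1) : ℝ) := by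
    exact_mod_cast Nat.factorial_le (Nat.le_succ N)
  calc ‖∫ u in s..t, fcirc f (N+1) (Y u) (consT (deriv X u) (iterInt X N u t))‖
      ≤ ∫ u in s..t, ‖fcirc f (N+1) (Y u) (consT (deriv X u) (iterInt X N u t))‖ :=
        intervalIntegral.norm_integral_le_integral_norm hst
    _ ≤ ∫ u in s..t, C * (‖deriv X u‖ * (W u ^ N / (Nat.factorial N : ℝ))) := by
        refine intervalIntegral.integral_mono_on hst ?_ ?_ ?_
        · refine ContinuousOn.intervalIntegrable ?_
          rw [Set.uIcc_of_le hst]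
          refine ContinuousOn.norm ?_
          exact (((fcirc_contDiff hf (N+1)).continuous.comp_continuousOn hYcs).clm_apply
            (consT_cont hXd N).continuousOn)
        · exact (continuous_const.mul (hXn.mul ((hWc.pow N).div_const _))).intervalIntegrable _ _
        · intro u hu
          have h1 : ‖fcirc f (N+1) (Y u) (consT (deriv X u) (iterInt X N u t))‖
              ≤ C * ‖consT (deriv X u) (iterInt X N u t)‖ :=
            le_trans ((fcirc f (N+1) (Y u)).le_opNorm _)
              (mul_le_mul_of_nonneg_right (hCle (Y u)) (norm_nonneg _))
          refine le_trans h1 ?_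
          rw [norm_consT]
          refine mul_le_mul_of_nonneg_left ?_ hC0
          exact mul_le_mul_of_nonneg_left (iterInt_norm_le hXd N hu.2) (norm_nonneg _)
    _ = C * ((∫ u in s..t, ‖deriv X u‖) ^ (N+1) / (Nat.factorial (N+1) : ℝ)) := by
        rw [intervalIntegral.integral_const_mul, ftc_pow hXd N]
    _ ≤ C * (∫ u in s..t, ‖deriv X u‖) ^ (N+1) / (Nat.factorial N : ℝ) := by
        rw [mul_div_assoc]
        refine mul_le_mul_of_nonneg_left ?_ hC0
        gcongr


end
end

section
/- Let X : [0,T] → ℝ^d be a C^1 path, let Q ≥ 1, and for each 1 ≤ r ≤ Q let A_r ∈ L((ℝ^d)^{⊗r}, ℝ^e) be a fixed linear map. Then for every partition s = t_0 < t_1 < ⋯ < t_n = t of an interval [s,t] ⊆ [0,T], the double sum is independent of the partition: Σ_{i=0}^{n−1} Σ_{l=1}^{Q} Σ_{l_1=0}^{Q−l} A_{l+l_1}(X^{l_1}_{s,t_i} ⊗ X^{l}_{t_i,t_{i+1}}) = Σ_{r=1}^{Q} A_r(X^r_{s,t}). -/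
open MeasureTheory

noncomputable section

section helpers

variable {d : ℕ} (X : ℝ → EuclideanSpace ℝ (Fin d))

lemma iterInt_succ_apply (k : ℕ) (s t : ℝ) (i : Fin (k+1) → Fin d) :
    iterInt X (k+1) s t i
      = ∫ u in s..t, iterInt X k s u (fun j => i j.castSucc) * deriv X u (i (Fin.last k)) := rfl

lemma continuous_iterInt (hX' : Continuous (deriv X)) (k : ℕ) (s₀ : ℝ) :
    ∀ i : Fin k → Fin d, Continuous fun w => iterInt X k s₀ w i := by
  induction k with
  | zero => intro i; simpa [iterInt] using continuous_const
  | succ k ih =>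
    intro i
    have hD : Continuous fun u => deriv X u (i (Fin.last k)) :=
      (EuclideanSpace.proj (i (Fin.last k))).continuous.comp hX'
    have hf : Continuous fun u =>
        iterInt X k s₀ u (fun j => i j.castSucc) * deriv X u (i (Fin.last k)) :=
      (ih _).mul hD
    simpa [iterInt_succ_apply] using
      intervalIntegral.continuous_primitive (fun a b => hf.intervalIntegrable a b) s₀

lemma iterInt_cast' {a b : ℕ} (h : a = b) (s t : ℝ) (p : Fin b → Fin d) :
    iterInt X b s t p = iterInt X a s t (fun j => p (Fin.cast h j)) := by
  subst h; rfl

lemma chen (hX' : Continuous (deriv X)) (s : ℝ) (r : ℕ) :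
    ∀ (u v : ℝ) (i : Fin r → Fin d),
    iterInt X r s v i
      = ∑ l : Fin (r+1),
          iterInt X (r - l) s u (fun j => i (Fin.castLE (Nat.sub_le r l) j))
          * iterInt X (l : ℕ) u v
              (fun j => i ⟨r - l + j, by have := j.isLt; have := l.isLt; omega⟩) := by
  induction r with
  | zero =>
    intro u v i
    simp [iterInt]
  | succ r ih =>
    intro u v i
    have hD : Continuous fun w => deriv X w (i (Fin.last r)) :=
      (EuclideanSpace.proj (i (Fin.last r))).continuous.comp hX'
    have hf : Continuous fun w =>
        iterInt X r s w (fun j => i j.castSucc) * deriv X w (i (Fin.last r)) :=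
      (continuous_iterInt X hX' r s _).mul hD
    rw [iterInt_succ_apply, ← intervalIntegral.integral_add_adjacent_intervals
        (b := u) (hf.intervalIntegrable s u) (hf.intervalIntegrable u v)]
    -- rewrite second integral using ih
    have key : (∫ w in u..v,
          iterInt X r s w (fun j => i j.castSucc) * deriv X w (i (Fin.last r)))
        = ∑ l : Fin (r+1),
            iterInt X (r - l) s u (fun j => i (Fin.castSucc (Fin.castLE (Nat.sub_le r l) j)))
            * iterInt X ((l : ℕ) + 1) u v
                (fun j => i ⟨r - l + j, by have := j.isLt; have := l.isLt; omega⟩) := by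
      have h1 : ∀ w, iterInt X r s w (fun j => i j.castSucc)
          = ∑ l : Fin (r+1),
              iterInt X (r - l) s u (fun j => i (Fin.castSucc (Fin.castLE (Nat.sub_le r l) j)))
              * iterInt X (l : ℕ) u w
                  (fun j => i (Fin.castSucc ⟨r - l + j, by have := j.isLt; have := l.isLt; omega⟩)) := by
        intro w
        exact ih u w (fun j => i j.castSucc)
      simp only [h1, Finset.sum_mul]
      rw [intervalIntegral.integral_finset_sum]
      · refine Finset.sum_congr rfl fun l _ => ?_
        have hcont : Continuous fun w => iterInt X (l : ℕ) u w
            (fun j => i (Fin.castSucc ⟨r - (l:ℕ) + j, by have := j.isLt; have := l.isLt; omega⟩)) :=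
          continuous_iterInt X hX' _ u _
        have : (∫ w in u..v,
            iterInt X (r - l) s u (fun j => i (Fin.castSucc (Fin.castLE (Nat.sub_le r l) j)))
            * iterInt X (l : ℕ) u w
                (fun j => i (Fin.castSucc ⟨r - l + j, by have := j.isLt; have := l.isLt; omega⟩))
            * deriv X w (i (Fin.last r)))
            = iterInt X (r - l) s u (fun j => i (Fin.castSucc (Fin.castLE (Nat.sub_le r l) j)))
            * ∫ w in u..v,
              iterInt X (l : ℕ) u w
                (fun j => i (Fin.castSucc ⟨r - l + j, by have := j.isLt; have := l.isLt; omega⟩))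
              * deriv X w (i (Fin.last r)) := by
          simp_rw [mul_assoc]
          exact intervalIntegral.integral_const_mul _ _
        rw [this]
        congr 1
        -- ∫ w in u..v, iterInt l u w (...) * deriv X w (i last) = iterInt (l+1) u v (...)
        rw [iterInt_succ_apply]
        apply intervalIntegral.integral_congr
        intro w _
        beta_reduce
        refine congrArg₂ (· * ·) rfl ?_
        refine congrArg (fun z => deriv X w (i z)) (Fin.ext ?_)
        have := l.isLt
        simp only [Fin.val_last]
        omega
      · intro l _
        exact ((continuous_const.mul (continuous_iterInt X hX' _ u _)).mul hD).intervalIntegrable u v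
    rw [key]
    rw [Fin.sum_univ_succ (n := r + 1)]
    congr 1
    · -- l = 0 term
      have : (fun j => i (Fin.castLE (Nat.sub_le (r+1) ((0 : Fin (r+2)) : ℕ)) j)) = i := by
        funext j; exact congrArg i (Fin.ext rfl)
      simp [iterInt, this]
    · refine Finset.sum_congr rfl fun l _ => ?_
      have hsub : ((r + 1) - ((l.succ : Fin (r+2)) : ℕ)) = r - (l : ℕ) := by
        simp only [Fin.val_succ]
        omega
      rw [iterInt_cast' X hsub]
      refine congrArg₂ (· * ·) ?_ ?_
      · rfl
      · refine congrArg (iterInt X ((l.succ : Fin (r+2)) : ℕ) u v) (funext fun j => ?_)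
        refine congrArg i (Fin.ext ?_)
        have := l.isLt
        simp only [Fin.val_succ]
        omega

lemma sum_apply'' {k : ℕ} {ι : Type*} (s : Finset ι) (f : ι → Tpow d k)
    (i : Fin k → Fin d) : (∑ x ∈ s, f x) i = ∑ x ∈ s, f x i := by
  classical
  induction s using Finset.cons_induction with
  | empty => rfl
  | cons a s ha ih => rw [Finset.sum_cons, Finset.sum_cons, ← ih]; rfl

lemma chenT (hX' : Continuous (deriv X)) (s u v : ℝ) (r : ℕ) :
    iterInt X r s v
      = ∑ l : Fin (r+1),
          tcast (Nat.sub_add_cancel (Nat.lt_succ_iff.mp l.isLt))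
            (tmul (iterInt X (r - (l : ℕ)) s u) (iterInt X (l : ℕ) u v)) := by
  refine PiLp.ext fun i => ?_
  have h2 : (∑ l : Fin (r+1),
        tcast (Nat.sub_add_cancel (Nat.lt_succ_iff.mp l.isLt))
          (tmul (iterInt X (r - (l : ℕ)) s u) (iterInt X (l : ℕ) u v))) i
      = ∑ l : Fin (r+1),
          (tcast (Nat.sub_add_cancel (Nat.lt_succ_iff.mp l.isLt))
            (tmul (iterInt X (r - (l : ℕ)) s u) (iterInt X (l : ℕ) u v))) i :=
    sum_apply'' _ _ _
  rw [h2, chen X hX' s r u v i]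
  exact Finset.sum_congr rfl fun l _ => rfl

lemma tcast_tmul_zero (s u v : ℝ) (r : ℕ) (h : r - 0 + 0 = r) :
    tcast h (tmul (iterInt X (r - 0) s u) (iterInt X 0 u v)) = iterInt X r s u := by
  refine PiLp.ext fun i => ?_
  show iterInt X r s u _ * 1 = iterInt X r s u i
  rw [mul_one]
  exact congrArg (iterInt X r s u) (funext fun j => rfl)

variable {e : ℕ} (A : (r : ℕ) → Tpow d r →L[ℝ] EuclideanSpace ℝ (Fin e))

lemma A_chen (hX' : Continuous (deriv X)) (s u v : ℝ) (r : ℕ) :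
    A r (iterInt X r s v) = A r (iterInt X r s u)
      + ∑ l : Fin r,
          A r (tcast (Nat.sub_add_cancel (Nat.succ_le_of_lt l.isLt))
            (tmul (iterInt X (r - ((l : ℕ)+1)) s u) (iterInt X ((l : ℕ)+1) u v))) := by
  rw [chenT X hX' s u v r, map_sum, Fin.sum_univ_succ]
  exact congrArg₂ (· + ·) (congrArg (A r) (tcast_tmul_zero X s u v r _))
    (Finset.sum_congr rfl fun l _ => rfl)

/-- junk-tolerant summand. -/
def body (s u v : ℝ) (r L : ℕ) : EuclideanSpace ℝ (Fin e) :=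
  if h : 1 ≤ L ∧ L ≤ r then
    A r (tcast (by omega : (r - L) + L = r)
      (tmul (iterInt X (r - L) s u) (iterInt X L u v)))
  else 0

lemma tcast_tmul_congr {a b c m : ℕ} (hab : a = b) (h1 : a + c = m) (h2 : b + c = m)
    (V : (k : ℕ) → Tpow d k) (w : Tpow d c) :
    tcast h1 (tmul (V a) w) = tcast h2 (tmul (V b) w) := by
  subst hab; rfl

lemma step (hX' : Continuous (deriv X)) (Q : ℕ) (s u v : ℝ) :
    ∑ l ∈ Finset.Icc 1 Q, ∑ l₁ ∈ Finset.range (Q - l + 1),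
        A (l + l₁) (tcast (Nat.add_comm l₁ l)
          (tmul (iterInt X l₁ s u) (iterInt X l u v)))
      = (∑ r ∈ Finset.Icc 1 Q, A r (iterInt X r s v))
        - ∑ r ∈ Finset.Icc 1 Q, A r (iterInt X r s u) := by
  rw [← Finset.sum_sub_distrib]
  have hr : ∀ r ∈ Finset.Icc 1 Q,
      A r (iterInt X r s v) - A r (iterInt X r s u)
        = ∑ L ∈ Finset.Icc 1 r, body X A s u v r L := by
    intro r _
    rw [A_chen X A hX' s u v r, add_sub_cancel_left]
    have h1 : ∀ l : Fin r,
        A r (tcast (Nat.sub_add_cancel (Nat.succ_le_of_lt l.isLt))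
          (tmul (iterInt X (r - ((l : ℕ)+1)) s u) (iterInt X ((l : ℕ)+1) u v)))
          = body X A s u v r ((l : ℕ) + 1) := by
      intro l
      rw [body, dif_pos ⟨Nat.le_add_left 1 _, Nat.succ_le_of_lt l.isLt⟩]
    simp only [h1]
    rw [Fin.sum_univ_eq_sum_range (fun L => body X A s u v r (L + 1)) r]
    rw [show Finset.Icc 1 r = Finset.Ico 1 (r+1) by rfl, Finset.sum_Ico_eq_sum_range]
    simp only [Nat.add_sub_cancel, Nat.add_comm 1]
  rw [Finset.sum_congr rfl hr]
  rw [Finset.sum_sigma', Finset.sum_sigma']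
  refine Finset.sum_nbij' (fun p => ⟨p.1 + p.2, p.1⟩) (fun p => ⟨p.2, p.1 - p.2⟩)
    ?_ ?_ ?_ ?_ ?_
  · rintro ⟨a, b⟩ hp
    simp only [Finset.mem_sigma, Finset.mem_Icc, Finset.mem_range] at hp ⊢
    omega
  · rintro ⟨a, b⟩ hp
    simp only [Finset.mem_sigma, Finset.mem_Icc, Finset.mem_range] at hp ⊢
    omega
  · rintro ⟨a, b⟩ hp
    simp only [Finset.mem_sigma, Finset.mem_Icc, Finset.mem_range] at hp
    show (⟨a, a + b - a⟩ : Σ _ : ℕ, ℕ) = ⟨a, b⟩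
    exact congrArg (Sigma.mk a) (by omega)
  · rintro ⟨a, b⟩ hp
    simp only [Finset.mem_sigma, Finset.mem_Icc, Finset.mem_range] at hp
    show (⟨b + (a - b), b⟩ : Σ _ : ℕ, ℕ) = ⟨a, b⟩
    rw [show b + (a - b) = a from by omega]
  · rintro ⟨a, b⟩ hp
    simp only [Finset.mem_sigma, Finset.mem_Icc, Finset.mem_range] at hp
    dsimp only
    show A (a + b) _ = body X A s u v (a + b) a
    rw [body, dif_pos ⟨hp.1.1, Nat.le_add_right _ _⟩]
    exact congrArg (A (a + b)) (tcast_tmul_congr (by simp) _ _ (fun k => iterInt X k s u) _)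

end helpers

/-- For a C¹ path `X`, `Q ≥ 1`, fixed linear maps `A_r : (ℝ^d)^{⊗r} → ℝ^e`
(`1 ≤ r ≤ Q`), and any partition `s = t₀ < ⋯ < t_n = t` of `[s,t] ⊆ [0,T]`:
`Σ_{i=0}^{n−1} Σ_{l=1}^{Q} Σ_{l₁=0}^{Q−l} A_{l+l₁}(X^{l₁}_{s,t_i} ⊗ X^{l}_{t_i,t_{i+1}})
  = Σ_{r=1}^{Q} A_r(X^r_{s,t})`; in particular the left-hand side does not depend on the
partition. -/
theorem partition_sum_independent {d e : ℕ} (T : ℝ)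
    (X : ℝ → EuclideanSpace ℝ (Fin d)) (hX : ContDiff ℝ 1 X)
    (Q : ℕ) (hQ : 1 ≤ Q)
    (A : (r : ℕ) → Tpow d r →L[ℝ] EuclideanSpace ℝ (Fin e))
    (s t : ℝ) (hs : 0 ≤ s) (hst : s ≤ t) (htT : t ≤ T)
    (n : ℕ) (hn : 1 ≤ n) (τ : ℕ → ℝ)
    (hτ0 : τ 0 = s) (hτn : τ n = t) (hmono : ∀ i, i < n → τ i < τ (i + 1)) :
    ∑ i ∈ Finset.range n, ∑ l ∈ Finset.Icc 1 Q, ∑ l₁ ∈ Finset.range (Q - l + 1),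
        A (l + l₁)
          (tcast (Nat.add_comm l₁ l)
            (tmul (iterInt X l₁ s (τ i)) (iterInt X l (τ i) (τ (i + 1)))))
      = ∑ r ∈ Finset.Icc 1 Q, A r (iterInt X r s t) := by
  have hX' : Continuous (deriv X) := hX.continuous_deriv le_rfl
  have hzero : ∑ r ∈ Finset.Icc 1 Q, A r (iterInt X r s s) = 0 := by
    refine Finset.sum_eq_zero fun r hr => ?_
    rw [Finset.mem_Icc] at hr
    obtain ⟨m, rfl⟩ : ∃ m, r = m + 1 := ⟨r - 1, by omega⟩
    have h0 : iterInt X (m+1) s s = 0 := by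
      refine PiLp.ext fun i => ?_
      rw [iterInt_succ_apply, intervalIntegral.integral_same]; rfl
    rw [h0, map_zero]
  calc ∑ i ∈ Finset.range n, ∑ l ∈ Finset.Icc 1 Q, ∑ l₁ ∈ Finset.range (Q - l + 1),
        A (l + l₁)
          (tcast (Nat.add_comm l₁ l)
            (tmul (iterInt X l₁ s (τ i)) (iterInt X l (τ i) (τ (i + 1)))))
      = ∑ i ∈ Finset.range n,
          ((∑ r ∈ Finset.Icc 1 Q, A r (iterInt X r s (τ (i + 1))))
            - ∑ r ∈ Finset.Icc 1 Q, A r (iterInt X r s (τ i))) :=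
        Finset.sum_congr rfl fun i _ => step X A hX' Q s (τ i) (τ (i + 1))
    _ = (∑ r ∈ Finset.Icc 1 Q, A r (iterInt X r s (τ n)))
          - ∑ r ∈ Finset.Icc 1 Q, A r (iterInt X r s (τ 0)) :=
        Finset.sum_range_sub (fun m => ∑ r ∈ Finset.Icc 1 Q, A r (iterInt X r s (τ m))) n
    _ = ∑ r ∈ Finset.Icc 1 Q, A r (iterInt X r s t) := by
        rw [hτn, hτ0, hzero, sub_zero]

end
end
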